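/- Let (Ω, F, P) be a probability space with filtration (F_k)_{k≥0}. Let c₀ ≥ 1, ρ > 0, c̃ > 0, positive constants c₁, …, c₆, and set c₇ = 3c₁³ + (c₂ + c₄)²/c₆ + 4c₁(c₂ + c₄). Let σ > 0 satisfy σ ≤ max(c₁, c₆, (c₂ + c₄)^{1/2})⁻¹ and let κ ∈ [0, 1]. Let (X_k)_{k≥1} be adapted random variables with E(X_k | F_{k−1}) = σ²·B_{k−1} and E(X_k² | F_{k−1}) = σ²·A_{k−1}, where A_k and B_k are F_k-measurable with |A_k| ≤ 9c₀ρ³, |B_k| ≤ 4ρ², and |X_k| ≤ c₁σ almost surely. Let (F_k)_{k≥0} and (G_k)_{k≥0} be adapted real processes such that, with ΔF_k = F_k − F_{k−1} and ΔG_k = G_k − G_{k−1}, one has |B_k − ΔF_k − c̃| ≤ c₃σ, |A_k − ΔG_k − c̃| ≤ c₅σ, |ΔF_k| ≤ c₂ and |ΔG_k| ≤ c₄. Let δ satisfy (2σ/c̃)·(2κ/σ³ + c₃ + c₅ + 2c₇) ≤ δ ≤ 1/2. Then the process Π_k = exp(σ²(1 − δ)(F_{k−1} − (1 − δ/2)G_{k−1}))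 · ∏_{i=1}^{k} (e^{−κ}(1 + X_i))^{δ−1}, k ≥ 1, is a supermartingale with respect to (F_k): E(Π_{k+1} | F_k) ≤ Π_k for all k ≥ 1. -/

import Mathlib

open MeasureTheory Finset

/-- The process `Π_k = exp(σ²(1−δ)(F_{k−1} − (1−δ/2)G_{k−1})) ∏_{i=1}^k (e^{−κ}(1+X_i))^{δ−1}`. -/
noncomputable def PiProc {Ω : Type*} (σ δ κ : ℝ) (F G X : ℕ → Ω → ℝ) (k : ℕ) (x : Ω) : ℝ :=
  Real.exp (σ ^ 2 * (1 - δ) * (F (k - 1) x - (1 - δ / 2) * G (k - 1) x))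
    * ∏ i ∈ Finset.Icc 1 k, (Real.exp (-κ) * (1 + X i x)) ^ (δ - 1)

/-!
Since `Π_{k+1} = Π_k · D_k · (1 + X_{k+1})^{δ-1}` with an `ℱ_k`-measurable drift factor `D_k`,
it suffices that `D_k · E[(1 + X_{k+1})^{δ-1} | ℱ_k] ≤ 1`. A third-order expansion of `(1 + u)^p`,
obtained through `log` and `exp`, bounds the conditional expectation by
`1 + (δ-1)σ²B_k + (δ-1)(δ-2)/2 · σ²A_k + 3(c₁σ)³`. Substituting `B_k ≈ ΔF_k + c̃` and
`A_k ≈ ΔG_k + c̃` leaves the negative drift `-(1-δ)σ²c̃δ/2`, which by the lower bound on `δ`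
absorbs `κ`, the errors `c₃σ`, `c₅σ` and the cubic term; `1 + y ≤ exp y` then gives the claim.
The smallness `c₁σ ≤ 1/12` that the expansion needs follows from the same lower bound on `δ`,
because `c̃ ≤ c₁² + c₄ + c₅σ`: the conditional second moment `σ²A_k` of `X_{k+1}` is at most
`(c₁σ)²`.
-/

lemma abs_log_one_add_sub_le {u : ℝ} (hu : |u| ≤ 1 / 2) :
    |Real.log (1 + u) - (u - u ^ 2 / 2)| ≤ 2 * |u| ^ 3 := by
  have h := Real.abs_log_sub_add_sum_range_le (x := -u) (by rw [abs_neg]; linarith) 2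
  simp only [Finset.sum_range_succ, Finset.sum_range_zero, sub_neg_eq_add, abs_neg] at h
  norm_num at h
  rw [show Real.log (1 + u) - (u - u ^ 2 / 2) = -u + u ^ 2 / 2 + Real.log (1 + u) by ring]
  refine h.trans ?_
  rw [div_le_iff₀ (by linarith [abs_nonneg u])]
  nlinarith [pow_nonneg (abs_nonneg u) 3]

lemma exp_le_taylor_three {z : ℝ} (hz : |z| ≤ 1) :
    Real.exp z ≤ 1 + z + z ^ 2 / 2 + 2 / 9 * |z| ^ 3 := by
  have h := Real.exp_bound hz (n := 3) (by norm_num)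
  simp only [Finset.sum_range_succ, Finset.sum_range_zero, Nat.factorial] at h
  norm_num at h
  linarith [(abs_sub_le_iff.1 h).1]

lemma one_add_rpow_le {u p : ℝ} (hu : |u| ≤ 1 / 12) (hp : |p| ≤ 1) :
    (1 + u) ^ p ≤ 1 + p * u + p * (p - 1) / 2 * u ^ 2 + 3 * |u| ^ 3 := by
  set L := Real.log (1 + u)
  have ha := abs_nonneg u
  have hr : |L - (u - u ^ 2 / 2)| ≤ 2 * |u| ^ 3 := abs_log_one_add_sub_le (by linarith)
  have hsub : |L - u| ≤ 2 / 3 * |u| ^ 2 := by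
    calc |L - u| ≤ |u ^ 2| / 2 + |L - (u - u ^ 2 / 2)| := by
          grw [show L - u = u ^ 2 / -2 + (L - (u - u ^ 2 / 2)) by ring, abs_add_le, abs_div,
            abs_neg, abs_two]
      _ ≤ 2 / 3 * |u| ^ 2 := by rw [abs_pow]; nlinarith [pow_nonneg ha 2]
  have hL : |L| ≤ 19 / 18 * |u| := by nlinarith [abs_sub_abs_le_abs_sub L u]
  have hplus : |L + u| ≤ 37 / 18 * |u| := by grw [abs_add_le, hL]; linarith
  have hp2 : p ^ 2 ≤ 1 := by nlinarith [sq_abs p, abs_nonneg p]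
  have hz : |p * L| ≤ 19 / 18 * |u| := by
    rw [abs_mul]; nlinarith [abs_nonneg p, abs_nonneg L]
  have hpr : |p * (L - (u - u ^ 2 / 2))| ≤ 2 * |u| ^ 3 := by
    rw [abs_mul]; nlinarith [abs_nonneg p, abs_nonneg (L - (u - u ^ 2 / 2))]
  have hsq : |p ^ 2 * ((L - u) * (L + u))| ≤ 37 / 27 * |u| ^ 3 := by
    rw [abs_mul, abs_mul, abs_of_nonneg (sq_nonneg p)]
    calc p ^ 2 * (|L - u| * |L + u|) ≤ 1 * (2 / 3 * |u| ^ 2 * (37 / 18 * |u|)) := by gcongr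
      _ = 37 / 27 * |u| ^ 3 := by ring
  have hz3 : |p * L| ^ 3 ≤ (19 / 18 * |u|) ^ 3 := by gcongr
  rw [Real.rpow_def_of_pos (by linarith [neg_abs_le u]), mul_comm]
  refine (exp_le_taylor_three (hz.trans (by linarith))).trans ?_
  have hexpand : 1 + p * L + (p * L) ^ 2 / 2 = 1 + p * u + p * (p - 1) / 2 * u ^ 2
      + p * (L - (u - u ^ 2 / 2)) + p ^ 2 * ((L - u) * (L + u)) / 2 := by ring
  rw [hexpand]
  linarith [le_abs_self (p * (L - (u - u ^ 2 / 2))), le_abs_self (p ^ 2 * ((L - u) * (L + u))),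
    pow_nonneg ha 3]

section CondExp

variable {Ω : Type*} {m m0 : MeasurableSpace Ω} {μ : Measure Ω} {Y : Ω → ℝ} {p ε : ℝ}

lemma integrable_one_add_rpow [IsFiniteMeasure μ] (hY : Integrable Y μ)
    (hY2 : Integrable (fun x => Y x ^ 2) μ)
    (hYε : ∀ᵐ x ∂μ, |Y x| ≤ ε) (hε : ε ≤ 1 / 12) (hp : |p| ≤ 1) :
    Integrable (fun x => (1 + Y x) ^ p) μ := by
  have hdom : Integrable (fun x => 1 + 3 * ε ^ 3 + p * Y x + p * (p - 1) / 2 * Y x ^ 2) μ :=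
    ((integrable_const _).add (hY.const_mul p)).add (hY2.const_mul _)
  refine hdom.mono' ((hY.aemeasurable.const_add 1).pow_const p).aestronglyMeasurable ?_
  filter_upwards [hYε] with x hx
  have h3 : |Y x| ^ 3 ≤ ε ^ 3 := by gcongr
  rw [Real.norm_eq_abs, abs_of_nonneg (Real.rpow_nonneg (by linarith [neg_abs_le (Y x)]) p)]
  linarith [one_add_rpow_le (hx.trans hε) hp]

lemma condExp_one_add_rpow_le [IsFiniteMeasure μ] (hm : m ≤ m0)
    (hY : Integrable Y μ) (hY2 : Integrable (fun x => Y x ^ 2) μ)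
    (hYε : ∀ᵐ x ∂μ, |Y x| ≤ ε) (hε : ε ≤ 1 / 12) (hp : |p| ≤ 1) :
    μ[fun x => (1 + Y x) ^ p|m] ≤ᵐ[μ]
      fun x => 1 + p * μ[Y|m] x + p * (p - 1) / 2 * μ[fun x => Y x ^ 2|m] x + 3 * ε ^ 3 := by
  set h : Ω → ℝ := (fun _ => 1 + 3 * ε ^ 3) + p • Y + (p * (p - 1) / 2) • fun x => Y x ^ 2
    with hh
  have hle : (fun x => (1 + Y x) ^ p) ≤ᵐ[μ] h := by
    filter_upwards [hYε] with x hx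
    have h3 : |Y x| ^ 3 ≤ ε ^ 3 := by gcongr
    simp only [hh, Pi.add_apply, Pi.smul_apply, smul_eq_mul]
    linarith [one_add_rpow_le (hx.trans hε) hp]
  have hint1 : Integrable ((fun _ => 1 + 3 * ε ^ 3) + p • Y) μ :=
    (integrable_const _).add (hY.smul p)
  have hint2 := hY2.smul (p * (p - 1) / 2)
  filter_upwards [condExp_mono (integrable_one_add_rpow hY hY2 hYε hε hp) (hint1.add hint2) hle,
    condExp_add hint1 hint2 m, condExp_add (integrable_const _) (hY.smul p) m,
    condExp_smul p Y m, condExp_smul (p * (p - 1) / 2) (fun x => Y x ^ 2) m]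
    with x hx h1 h2 h3 h4
  rw [h1] at hx
  simp only [Pi.add_apply, Pi.smul_apply, smul_eq_mul] at hx h2 h3 h4
  rw [h2, h3, h4, condExp_const hm] at hx
  linarith

lemma ctilde_le_of_condExp_sq_eq [NeZero μ] {Y a d : Ω → ℝ} {c₁ c₄ c₅ σ ctilde : ℝ}
    (hσ : 0 < σ) (hcond : μ[fun x => Y x ^ 2|m] =ᵐ[μ] fun x => σ ^ 2 * a x)
    (hY : ∀ᵐ x ∂μ, |Y x| ≤ c₁ * σ) (ha : ∀ᵐ x ∂μ, |a x - d x - ctilde| ≤ c₅ * σ)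
    (hd : ∀ᵐ x ∂μ, |d x| ≤ c₄) :
    ctilde ≤ c₁ ^ 2 + c₄ + c₅ * σ := by
  have hY2 : ∀ᵐ x ∂μ, Y x ^ 2 ≤ (c₁ * σ) ^ 2 := hY.mono fun x hx => by
    rw [← sq_abs]; exact pow_le_pow_left₀ (abs_nonneg _) hx 2
  have hmoment : ∀ᵐ x ∂μ, σ ^ 2 * a x ≤ (c₁ * σ) ^ 2 := by
    filter_upwards [hcond, condExp_le_nonneg_const (m := m) (sq_nonneg (c₁ * σ)) hY2]
      with x h1 h2
    rwa [← h1]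
  obtain ⟨x, hax, hx, hdx⟩ := (hmoment.and (ha.and hd)).exists
  have : a x ≤ c₁ ^ 2 := by nlinarith [pow_pos hσ 2]
  linarith [abs_le.mp hx, abs_le.mp hdx]

lemma ae_forall_one_add_nonneg {X : ℕ → Ω → ℝ} {ε : ℝ}
    (hX : ∀ k, 1 ≤ k → ∀ᵐ x ∂μ, |X k x| ≤ ε) (hε : ε ≤ 1) :
    ∀ᵐ x ∂μ, ∀ i, 1 ≤ i → 0 ≤ 1 + X i x := by
  refine ae_all_iff.2 fun i => ?_
  rcases Nat.lt_or_ge i 1 with hi | hi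
  · exact ae_of_all _ fun _ h => absurd h (by omega)
  · filter_upwards [hX i hi] with x hx _
    linarith [neg_abs_le (X i x)]

lemma condExp_mul_le_of_condExp_le {W g M V : Ω → ℝ} (hW : StronglyMeasurable[m] W)
    (hW0 : 0 ≤ᵐ[μ] W) (hg : Integrable g μ) (hgM : μ[g|m] ≤ᵐ[μ] M) (hWM : W * M ≤ᵐ[μ] V)
    (hV : 0 ≤ᵐ[μ] V) : μ[W * g|m] ≤ᵐ[μ] V := by
  by_cases hWg : Integrable (W * g) μ
  · filter_upwards [condExp_mul_of_stronglyMeasurable_left hW hWg hg, hW0, hgM, hWM]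
      with x hx hx0 hxM hxV
    rw [hx, Pi.mul_apply]
    exact (mul_le_mul_of_nonneg_left hxM hx0).trans hxV
  · rw [condExp_of_not_integrable hWg]
    exact hV

end CondExp

noncomputable def c₇ (c₁ c₂ c₄ c₆ : ℝ) : ℝ :=
  3 * c₁ ^ 3 + (c₂ + c₄) ^ 2 / c₆ + 4 * c₁ * (c₂ + c₄)

section Budget

variable {c₁ c₂ c₃ c₄ c₅ c₆ ctilde σ κ δ : ℝ}

lemma three_mul_pow_add_le_c₇ (hc₁ : 0 ≤ c₁) (hc₂ : 0 ≤ c₂) (hc₆ : 0 ≤ c₆) :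
    3 * c₁ ^ 3 + 4 * c₁ * c₄ ≤ c₇ c₁ c₂ c₄ c₆ := by
  have := div_nonneg (sq_nonneg (c₂ + c₄)) hc₆
  unfold c₇
  nlinarith [mul_nonneg hc₁ hc₂]

lemma nonneg_of_budget (hc₁ : 0 ≤ c₁) (hc₂ : 0 ≤ c₂) (hc₃ : 0 ≤ c₃) (hc₄ : 0 ≤ c₄)
    (hc₅ : 0 ≤ c₅) (hc₆ : 0 ≤ c₆) (hctilde : 0 < ctilde) (hσ : 0 < σ) (hκ : 0 ≤ κ)
    (hS : 2 * σ * (2 * κ / σ ^ 3 + c₃ + c₅ + 2 * c₇ c₁ c₂ c₄ c₆) ≤ δ * ctilde) :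
    0 ≤ δ := by
  have h7 := three_mul_pow_add_le_c₇ (c₄ := c₄) hc₁ hc₂ hc₆
  have : 0 ≤ 2 * σ * (2 * κ / σ ^ 3 + c₃ + c₅ + 2 * c₇ c₁ c₂ c₄ c₆) := by
    have : 0 ≤ 2 * κ / σ ^ 3 := by positivity
    nlinarith [mul_nonneg hc₁ hc₄, pow_nonneg hc₁ 3]
  nlinarith

lemma mul_le_one_div_twelve_of_budget (hc₁ : 0 < c₁) (hc₂ : 0 ≤ c₂) (hc₃ : 0 ≤ c₃)
    (hc₄ : 0 ≤ c₄) (hc₅ : 0 ≤ c₅) (hc₆ : 0 ≤ c₆) (hctilde : 0 ≤ ctilde) (hσ : 0 < σ)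
    (hκ : 0 ≤ κ) (hS : 2 * σ * (2 * κ / σ ^ 3 + c₃ + c₅ + 2 * c₇ c₁ c₂ c₄ c₆) ≤ δ * ctilde)
    (hδ : δ ≤ 1 / 2) (hct : ctilde ≤ c₁ ^ 2 + c₄ + c₅ * σ) :
    c₁ * σ ≤ 1 / 12 := by
  have h7 := three_mul_pow_add_le_c₇ (c₄ := c₄) hc₁.le hc₂ hc₆
  have hκσ : 0 ≤ 2 * κ / σ ^ 3 := by positivity
  have hkey : 24 * (c₁ * σ) * c₁ ^ 2 + 32 * (c₁ * σ) * c₄ ≤ c₁ ^ 2 + c₄ := by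
    nlinarith [mul_nonneg hσ.le hc₃, mul_nonneg hσ.le hc₅, mul_nonneg hσ.le hκσ]
  by_contra! hbig
  nlinarith [mul_pos (sub_pos.mpr hbig) (pow_pos hc₁ 2), mul_nonneg (sub_pos.mpr hbig).le hc₄]

lemma drift_budget (hc₁ : 0 ≤ c₁) (hc₂ : 0 ≤ c₂) (hc₄ : 0 ≤ c₄) (hc₆ : 0 ≤ c₆) (hσ : 0 < σ)
    (hκ : 0 ≤ κ) (hS : 2 * σ * (2 * κ / σ ^ 3 + c₃ + c₅ + 2 * c₇ c₁ c₂ c₄ c₆) ≤ δ * ctilde)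
    (hδ : δ ≤ 1 / 2) :
    κ * (1 - δ) + (1 - δ) * σ ^ 3 * (c₃ + c₅) + 3 * (c₁ * σ) ^ 3
      ≤ (1 - δ) * σ ^ 2 * (ctilde * δ) / 2 := by
  have h7 := three_mul_pow_add_le_c₇ (c₄ := c₄) hc₁ hc₂ hc₆
  have ht : 0 ≤ 1 - δ := by linarith
  have hscaled :=
    mul_le_mul_of_nonneg_right hS (div_nonneg (mul_nonneg ht (sq_nonneg σ)) zero_le_two)
  have hexpand : 2 * σ * (2 * κ / σ ^ 3 + c₃ + c₅ + 2 * c₇ c₁ c₂ c₄ c₆) * ((1 - δ) * σ ^ 2 / 2)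
      = 2 * (κ * (1 - δ)) + (1 - δ) * σ ^ 3 * (c₃ + c₅) + 2 * (1 - δ) * σ ^ 3 * c₇ c₁ c₂ c₄ c₆ := by
    field_simp
    ring
  have hcube : 3 * (c₁ * σ) ^ 3 ≤ 2 * (1 - δ) * σ ^ 3 * c₇ c₁ c₂ c₄ c₆ := by
    have hσ3 : 0 ≤ σ ^ 3 := by positivity
    have h7' : 3 * c₁ ^ 3 ≤ c₇ c₁ c₂ c₄ c₆ := by nlinarith [mul_nonneg hc₁ hc₄]
    have h1 := mul_nonneg (mul_nonneg (by linarith : 0 ≤ 1 - 2 * δ) hσ3)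
      ((mul_nonneg zero_le_three (pow_nonneg hc₁ 3)).trans h7')
    have h2 := mul_le_mul_of_nonneg_left h7' hσ3
    rw [mul_pow]
    nlinarith
  nlinarith [mul_nonneg hκ ht]

lemma exp_mul_drift_le_one {a b dF dG : ℝ} (hδ0 : 0 ≤ δ) (hδ1 : δ ≤ 1)
    (hb : |b - dF - ctilde| ≤ c₃ * σ) (ha : |a - dG - ctilde| ≤ c₅ * σ)
    (hbudget : κ * (1 - δ) + (1 - δ) * σ ^ 3 * (c₃ + c₅) + 3 * (c₁ * σ) ^ 3
      ≤ (1 - δ) * σ ^ 2 * (ctilde * δ) / 2) :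
    Real.exp (σ ^ 2 * (1 - δ) * (dF - (1 - δ / 2) * dG) + κ * (1 - δ))
      * (1 + (δ - 1) * (σ ^ 2 * b) + (δ - 1) * (δ - 1 - 1) / 2 * (σ ^ 2 * a) + 3 * (c₁ * σ) ^ 3)
      ≤ 1 := by
  set E := σ ^ 2 * (1 - δ) * (dF - (1 - δ / 2) * dG) + κ * (1 - δ) with hE
  have hb' := mul_le_mul_of_nonneg_left (neg_le_of_abs_le hb) (by positivity : 0 ≤ (1 - δ) * σ ^ 2)
  have ha' := mul_le_mul_of_nonneg_left (le_of_abs_le ha)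
    (mul_nonneg (mul_nonneg (by linarith) (by linarith)) (sq_nonneg σ) :
      0 ≤ (1 - δ) * (1 - δ / 2) * σ ^ 2)
  have hc₅σ : 0 ≤ δ / 2 * (1 - δ) * σ ^ 2 * (c₅ * σ) :=
    mul_nonneg (by positivity) ((abs_nonneg _).trans ha)
  have hM : 1 + (δ - 1) * (σ ^ 2 * b) + (δ - 1) * (δ - 1 - 1) / 2 * (σ ^ 2 * a)
      + 3 * (c₁ * σ) ^ 3 ≤ Real.exp (-E) := by
    refine le_trans ?_ (Real.add_one_le_exp _)
    rw [hE]
    linarith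
  calc Real.exp E * _ ≤ Real.exp E * Real.exp (-E) := by gcongr
    _ = 1 := by rw [← Real.exp_add, add_neg_cancel, Real.exp_zero]

end Budget

section PiProc

variable {Ω : Type*} {σ δ κ : ℝ} {F G X : ℕ → Ω → ℝ}

noncomputable def driftFactor (σ δ κ : ℝ) (F G : ℕ → Ω → ℝ) (k : ℕ) (x : Ω) : ℝ :=
  Real.exp (σ ^ 2 * (1 - δ) * ((F k x - F (k - 1) x) - (1 - δ / 2) * (G k x - G (k - 1) x))
    + κ * (1 - δ))

lemma PiProc_succ {k : ℕ} {x : Ω} (hX : 0 ≤ 1 + X (k + 1) x) :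
    PiProc σ δ κ F G X (k + 1) x
      = PiProc σ δ κ F G X k x * driftFactor σ δ κ F G k x * (1 + X (k + 1) x) ^ (δ - 1) := by
  have hκ : Real.exp (-κ) ^ (δ - 1) = Real.exp (κ * (1 - δ)) := by
    rw [← Real.exp_mul]; ring_nf
  simp only [PiProc, driftFactor, Nat.add_sub_cancel,
    Finset.prod_Icc_succ_top (by omega : 1 ≤ k + 1), Real.mul_rpow (Real.exp_nonneg _) hX, hκ]
  rw [show σ ^ 2 * (1 - δ) * (F k x - (1 - δ / 2) * G k x)
      = σ ^ 2 * (1 - δ) * (F (k - 1) x - (1 - δ / 2) * G (k - 1) x)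
        + σ ^ 2 * (1 - δ) * ((F k x - F (k - 1) x) - (1 - δ / 2) * (G k x - G (k - 1) x)) by ring,
    Real.exp_add, Real.exp_add]
  ring

lemma PiProc_nonneg {k : ℕ} {x : Ω} (hX : ∀ i ∈ Icc 1 k, 0 ≤ 1 + X i x) :
    0 ≤ PiProc σ δ κ F G X k x :=
  mul_nonneg (Real.exp_nonneg _) <| prod_nonneg fun i hi =>
    Real.rpow_nonneg (mul_nonneg (Real.exp_nonneg _) (hX i hi)) _

lemma adapted_PiProc {m0 : MeasurableSpace Ω} {ℱ : Filtration ℕ m0}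
    (hX : ∀ i, 1 ≤ i → Measurable[ℱ i] (X i)) (hF : Adapted ℱ F) (hG : Adapted ℱ G) :
    Adapted ℱ (PiProc σ δ κ F G X) := by
  intro k
  have hF' := (hF (k - 1)).mono (ℱ.mono (Nat.sub_le k 1)) le_rfl
  have hG' := (hG (k - 1)).mono (ℱ.mono (Nat.sub_le k 1)) le_rfl
  refine Measurable.mul (by fun_prop) (Finset.measurable_prod _ fun i hi => ?_)
  have hXi := (hX i (mem_Icc.mp hi).1).mono (ℱ.mono (mem_Icc.mp hi).2) le_rfl
  fun_prop

lemma adapted_driftFactor {m0 : MeasurableSpace Ω} {ℱ : Filtration ℕ m0}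
    (hF : Adapted ℱ F) (hG : Adapted ℱ G) : Adapted ℱ (driftFactor σ δ κ F G) := by
  intro k
  have hF' := (hF (k - 1)).mono (ℱ.mono (Nat.sub_le k 1)) le_rfl
  have hG' := (hG (k - 1)).mono (ℱ.mono (Nat.sub_le k 1)) le_rfl
  have hFk := hF k
  have hGk := hG k
  unfold driftFactor
  fun_prop

lemma condExp_PiProc_succ_le {m0 : MeasurableSpace Ω} {ℱ : Filtration ℕ m0} {μ : Measure Ω}
    {k : ℕ} {M : Ω → ℝ} (hX : ∀ i, 1 ≤ i → Measurable[ℱ i] (X i)) (hF : Adapted ℱ F)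
    (hG : Adapted ℱ G) (hpos : ∀ᵐ x ∂μ, ∀ i, 1 ≤ i → 0 ≤ 1 + X i x)
    (hint : Integrable (fun x => (1 + X (k + 1) x) ^ (δ - 1)) μ)
    (hcond : μ[fun x => (1 + X (k + 1) x) ^ (δ - 1)|ℱ k] ≤ᵐ[μ] M)
    (hdrift : ∀ᵐ x ∂μ, driftFactor σ δ κ F G k x * M x ≤ 1) :
    μ[PiProc σ δ κ F G X (k + 1)|ℱ k] ≤ᵐ[μ] PiProc σ δ κ F G X k := by
  have hnonneg : ∀ᵐ x ∂μ, 0 ≤ PiProc σ δ κ F G X k x :=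
    hpos.mono fun x hx => PiProc_nonneg fun i hi => hx i (mem_Icc.mp hi).1
  have hsplit : PiProc σ δ κ F G X (k + 1) =ᵐ[μ]
      (PiProc σ δ κ F G X k * driftFactor σ δ κ F G k) * fun x => (1 + X (k + 1) x) ^ (δ - 1) :=
    hpos.mono fun x hx => PiProc_succ (hx (k + 1) (by omega))
  refine (condExp_congr_ae hsplit).trans_le (condExp_mul_le_of_condExp_le
    ((adapted_PiProc hX hF hG k).mul (adapted_driftFactor hF hG k)).stronglyMeasurable
    (hnonneg.mono fun x hx => mul_nonneg hx (Real.exp_nonneg _)) hint hcond ?_ hnonneg)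
  filter_upwards [hnonneg, hdrift] with x hx hxM
  rw [Pi.mul_apply, Pi.mul_apply, mul_assoc]
  exact mul_le_of_le_one_right hx hxM

end PiProc

theorem abstract_supermartingale_lemma_general
    {Ω : Type*} {m0 : MeasurableSpace Ω} (P : Measure Ω) [IsProbabilityMeasure P]
    (ℱ : Filtration ℕ m0)
    (ctilde c₁ c₂ c₃ c₄ c₅ c₆ σ κ δ : ℝ)
    (hctilde : 0 < ctilde)
    (hc₁ : 0 < c₁) (hc₂ : 0 < c₂) (hc₃ : 0 < c₃) (hc₄ : 0 < c₄) (hc₅ : 0 < c₅) (hc₆ : 0 < c₆)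
    (hσ0 : 0 < σ)
    (hκ : κ ∈ Set.Icc (0 : ℝ) 1)
    (X A B F G : ℕ → Ω → ℝ)
    (hXadp : ∀ k, 1 ≤ k → StronglyMeasurable[ℱ k] (X k))
    (hXint : ∀ k, 1 ≤ k → Integrable (X k) P)
    (hXsqint : ∀ k, 1 ≤ k → Integrable (fun x => X k x ^ 2) P)
    (hFadp : ∀ k, StronglyMeasurable[ℱ k] (F k))
    (hGadp : ∀ k, StronglyMeasurable[ℱ k] (G k))
    (hcondB : ∀ k, 1 ≤ k → P[X k|ℱ (k - 1)] =ᵐ[P] fun x => σ ^ 2 * B (k - 1) x)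
    (hcondA : ∀ k, 1 ≤ k → P[(fun x => X k x ^ 2)|ℱ (k - 1)] =ᵐ[P] fun x => σ ^ 2 * A (k - 1) x)
    (hXbd : ∀ k, 1 ≤ k → ∀ᵐ x ∂P, |X k x| ≤ c₁ * σ)
    (hF : ∀ k, 1 ≤ k → ∀ᵐ x ∂P, |B k x - (F k x - F (k - 1) x) - ctilde| ≤ c₃ * σ)
    (hG : ∀ k, 1 ≤ k → ∀ᵐ x ∂P, |A k x - (G k x - G (k - 1) x) - ctilde| ≤ c₅ * σ)
    (hΔG : ∀ k, 1 ≤ k → ∀ᵐ x ∂P, |G k x - G (k - 1) x| ≤ c₄)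
    (hδlow : 2 * σ / ctilde * (2 * κ / σ ^ 3 + c₃ + c₅
        + 2 * (3 * c₁ ^ 3 + (c₂ + c₄) ^ 2 / c₆ + 4 * c₁ * (c₂ + c₄))) ≤ δ)
    (hδhigh : δ ≤ 1 / 2) :
    ∀ k, 1 ≤ k →
      P[PiProc σ δ κ F G X (k + 1)|ℱ k] ≤ᵐ[P] PiProc σ δ κ F G X k := by
  intro k hk
  have hS : 2 * σ * (2 * κ / σ ^ 3 + c₃ + c₅ + 2 * c₇ c₁ c₂ c₄ c₆) ≤ δ * ctilde := by
    rwa [div_mul_eq_mul_div, div_le_iff₀ hctilde] at hδlow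
  have hδ0 := nonneg_of_budget hc₁.le hc₂.le hc₃.le hc₄.le hc₅.le hc₆.le hctilde hσ0 hκ.1 hS
  have hp : |δ - 1| ≤ 1 := abs_le.mpr ⟨by linarith, by linarith⟩
  have hcondA' : P[(fun x => X (k + 1) x ^ 2)|ℱ k] =ᵐ[P] fun x => σ ^ 2 * A k x :=
    hcondA (k + 1) (by omega)
  have hcondB' : P[X (k + 1)|ℱ k] =ᵐ[P] fun x => σ ^ 2 * B k x := hcondB (k + 1) (by omega)
  have hXk := hXbd (k + 1) (by omega)
  have hsmall : c₁ * σ ≤ 1 / 12 :=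
    mul_le_one_div_twelve_of_budget hc₁ hc₂.le hc₃.le hc₄.le hc₅.le hc₆.le hctilde.le hσ0 hκ.1
      hS hδhigh (ctilde_le_of_condExp_sq_eq hσ0 hcondA' hXk (hG k hk) (hΔG k hk))
  refine condExp_PiProc_succ_le (fun i hi => (hXadp i hi).measurable)
    (fun i => (hFadp i).measurable) (fun i => (hGadp i).measurable)
    (ae_forall_one_add_nonneg hXbd (hsmall.trans (by norm_num)))
    (integrable_one_add_rpow (hXint _ (by omega)) (hXsqint _ (by omega)) hXk hsmall hp)
    (condExp_one_add_rpow_le (ℱ.le k) (hXint _ (by omega)) (hXsqint _ (by omega)) hXk hsmall hp) ?_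
  filter_upwards [hcondA', hcondB', hF k hk, hG k hk] with x hAx hBx hFx hGx
  rw [hAx, hBx]
  exact exp_mul_drift_le_one hδ0 (by linarith) hFx hGx
    (drift_budget hc₁.le hc₂.le hc₄.le hc₆.le hσ0 hκ.1 hS hδhigh)

/-- The abstract supermartingale lemma: under the stated conditional moment and increment
hypotheses, with `c₇ = 3c₁³ + (c₂+c₄)²/c₆ + 4c₁(c₂+c₄)` and
`(2σ/c̃)(2κ/σ³ + c₃ + c₅ + 2c₇) ≤ δ ≤ 1/2`, the process `Π_k` is a supermartingale:
`E(Π_{k+1} | F_k) ≤ Π_k` for all `k ≥ 1`. -/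
theorem abstract_supermartingale_lemma
    {Ω : Type*} {m0 : MeasurableSpace Ω} (P : Measure Ω) [IsProbabilityMeasure P]
    (ℱ : Filtration ℕ m0)
    (c₀ ρ ctilde c₁ c₂ c₃ c₄ c₅ c₆ σ κ δ : ℝ)
    (hc₀ : 1 ≤ c₀) (hρ : 0 < ρ) (hctilde : 0 < ctilde)
    (hc₁ : 0 < c₁) (hc₂ : 0 < c₂) (hc₃ : 0 < c₃) (hc₄ : 0 < c₄) (hc₅ : 0 < c₅) (hc₆ : 0 < c₆)
    (hσ0 : 0 < σ)
    (hσ : σ ≤ (max (max c₁ c₆) ((c₂ + c₄) ^ ((1 : ℝ) / 2)))⁻¹)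
    (hκ : κ ∈ Set.Icc (0 : ℝ) 1)
    (X A B F G : ℕ → Ω → ℝ)
    (hXadp : ∀ k, 1 ≤ k → StronglyMeasurable[ℱ k] (X k))
    (hXint : ∀ k, 1 ≤ k → Integrable (X k) P)
    (hXsqint : ∀ k, 1 ≤ k → Integrable (fun x => X k x ^ 2) P)
    (hAadp : ∀ k, StronglyMeasurable[ℱ k] (A k))
    (hBadp : ∀ k, StronglyMeasurable[ℱ k] (B k))
    (hFadp : ∀ k, StronglyMeasurable[ℱ k] (F k))
    (hGadp : ∀ k, StronglyMeasurable[ℱ k] (G k))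
    (hcondB : ∀ k, 1 ≤ k → P[X k|ℱ (k - 1)] =ᵐ[P] fun x => σ ^ 2 * B (k - 1) x)
    (hcondA : ∀ k, 1 ≤ k → P[(fun x => X k x ^ 2)|ℱ (k - 1)] =ᵐ[P] fun x => σ ^ 2 * A (k - 1) x)
    (hAbd : ∀ k, ∀ᵐ x ∂P, |A k x| ≤ 9 * c₀ * ρ ^ 3)
    (hBbd : ∀ k, ∀ᵐ x ∂P, |B k x| ≤ 4 * ρ ^ 2)
    (hXbd : ∀ k, 1 ≤ k → ∀ᵐ x ∂P, |X k x| ≤ c₁ * σ)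
    (hF : ∀ k, 1 ≤ k → ∀ᵐ x ∂P, |B k x - (F k x - F (k - 1) x) - ctilde| ≤ c₃ * σ)
    (hG : ∀ k, 1 ≤ k → ∀ᵐ x ∂P, |A k x - (G k x - G (k - 1) x) - ctilde| ≤ c₅ * σ)
    (hΔF : ∀ k, 1 ≤ k → ∀ᵐ x ∂P, |F k x - F (k - 1) x| ≤ c₂)
    (hΔG : ∀ k, 1 ≤ k → ∀ᵐ x ∂P, |G k x - G (k - 1) x| ≤ c₄)
    (hδlow : 2 * σ / ctilde * (2 * κ / σ ^ 3 + c₃ + c₅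
        + 2 * (3 * c₁ ^ 3 + (c₂ + c₄) ^ 2 / c₆ + 4 * c₁ * (c₂ + c₄))) ≤ δ)
    (hδhigh : δ ≤ 1 / 2) :
    ∀ k, 1 ≤ k →
      P[PiProc σ δ κ F G X (k + 1)|ℱ k] ≤ᵐ[P] PiProc σ δ κ F G X k :=
  abstract_supermartingale_lemma_general P ℱ ctilde c₁ c₂ c₃ c₄ c₅ c₆ σ κ δ hctilde hc₁ hc₂ hc₃ hc₄
    hc₅ hc₆ hσ0 hκ X A B F G hXadp hXint hXsqint hFadp hGadp hcondB hcondA hXbd hF hG hΔG hδlow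
    hδhigh
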